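/- arXiv:1708.02463 — 5 statements merged into one kernel-verified Lean document; each statement's English description precedes it below -/
import Mathlib

section
/- Let A be a bounded self-adjoint operator on a complex Hilbert space H and let a < b be real numbers such that the open interval (a, b) contains no point of the real spectrum of A. Let V be a non-negative bounded operator on H with ‖V‖ < b − a. Then the open interval (a + ‖V‖, b) contains no point of the real spectrum of A + V. -/
/-!
For `μ ∈ (a + ‖V‖, b)` the resolvent `R = (μ - A)⁻¹` exists and, since the spectrum of `A` avoids
`(a, b)`, satisfies `R ≤ (μ - a)⁻¹`. Hence `√V R √V ≤ ‖V‖ / (μ - a) < 1`, so `1` is not in the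
spectrum of `√V R √V`, nor of `V R` (the nonzero spectra of `xy` and `yx` agree). Then
`μ - (A + V) = (1 - V R)(μ - A)` is invertible.
-/

open Set spectrum

lemma inv_sub_le_inv_sub_of_notMem_Ioo {a b μ t : ℝ} (ha : a < μ) (hb : μ < b)
    (ht : t ∉ Ioo a b) : (μ - t)⁻¹ ≤ (μ - a)⁻¹ := by
  rcases le_or_gt t a with hta | hat
  · exact inv_anti₀ (by linarith) (by linarith)
  · have hbt : b ≤ t := not_lt.mp fun htb => ht ⟨hat, htb⟩
    calc (μ - t)⁻¹ ≤ 0 := inv_nonpos.mpr (by linarith)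
      _ ≤ (μ - a)⁻¹ := inv_nonneg.mpr (by linarith)

section Algebra

variable {R 𝒜 : Type*} [CommRing R] [Ring 𝒜] [Algebra R 𝒜]

lemma algebraMap_sub_add_eq_mul {A V : 𝒜} {μ : R} (hμ : μ ∉ spectrum R A) :
    algebraMap R 𝒜 μ - (A + V) = (1 - V * resolvent A μ) * (algebraMap R 𝒜 μ - A) := by
  rw [sub_mul, one_mul, mul_assoc, resolvent, Ring.inverse_mul_cancel _ (notMem_iff.mp hμ),
    mul_one]
  abel

lemma notMem_spectrum_add_of_isUnit_one_sub_mul_resolvent {A V : 𝒜} {μ : R}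
    (hμ : μ ∉ spectrum R A) (hV : IsUnit (1 - V * resolvent A μ)) :
    μ ∉ spectrum R (A + V) := by
  rw [notMem_iff, algebraMap_sub_add_eq_mul hμ]
  exact hV.mul (notMem_iff.mp hμ)

end Algebra

section CStarAlgebra

variable {𝒜 : Type*} [CStarAlgebra 𝒜]

lemma resolvent_eq_cfc {A : 𝒜} (hA : IsSelfAdjoint A) {μ : ℝ} (hμ : μ ∉ spectrum ℝ A) :
    resolvent A μ = cfc (fun t => (μ - t)⁻¹) A := by
  have hne : ∀ t ∈ spectrum ℝ A, μ - t ≠ 0 := fun t ht h => hμ (sub_eq_zero.mp h ▸ ht)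
  rw [cfc_inv (fun t => μ - t) A hne, cfc_sub _ _ A, cfc_const μ A, cfc_id' ℝ A, resolvent]

lemma IsSelfAdjoint.resolvent {A : 𝒜} (hA : IsSelfAdjoint A) {μ : ℝ} (hμ : μ ∉ spectrum ℝ A) :
    IsSelfAdjoint (resolvent A μ) := by
  rw [resolvent_eq_cfc hA hμ]
  exact cfc_predicate _ A

variable [PartialOrder 𝒜] [StarOrderedRing 𝒜]

lemma resolvent_le_algebraMap_inv_sub {A : 𝒜} (hA : IsSelfAdjoint A) {a b μ : ℝ}
    (hgap : Ioo a b ∩ spectrum ℝ A = ∅) (ha : a < μ) (hb : μ < b) :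
    resolvent A μ ≤ algebraMap ℝ 𝒜 (μ - a)⁻¹ := by
  have hnot : ∀ t ∈ spectrum ℝ A, t ∉ Ioo a b := fun t ht hab => hgap.subset ⟨hab, ht⟩
  have hμ : μ ∉ spectrum ℝ A := fun h => hnot μ h ⟨ha, hb⟩
  have hne : ∀ t ∈ spectrum ℝ A, μ - t ≠ 0 := fun t ht h => hμ (sub_eq_zero.mp h ▸ ht)
  rw [resolvent_eq_cfc hA hμ]
  refine cfc_le_algebraMap _ _ A (fun t ht => inv_sub_le_inv_sub_of_notMem_Ioo ha hb (hnot t ht))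
    ?_ hA
  exact ContinuousOn.inv₀ (by fun_prop) hne

lemma isUnit_one_sub_mul_of_le_algebraMap {V R : 𝒜} (hV : 0 ≤ V) (hR : IsSelfAdjoint R) {c : ℝ}
    (hRc : R ≤ algebraMap ℝ 𝒜 c) (hc : 0 ≤ c) (hcV : c * ‖V‖ < 1) : IsUnit (1 - V * R) := by
  set W := CFC.sqrt V
  have hW : IsSelfAdjoint W := .of_nonneg (CFC.sqrt_nonneg V)
  have hWW : W * W = V := CFC.sqrt_mul_sqrt_self V hV
  have hWRW : W * R * W ≤ algebraMap ℝ 𝒜 (c * ‖V‖) :=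
    calc W * R * W ≤ W * algebraMap ℝ 𝒜 c * W := IsSelfAdjoint.conjugate_le_conjugate hRc hW
      _ = c • V := by
        rw [Algebra.algebraMap_eq_smul_one, mul_smul_comm, mul_one, smul_mul_assoc, hWW]
      _ ≤ c • algebraMap ℝ 𝒜 ‖V‖ :=
          smul_le_smul_of_nonneg_left (IsSelfAdjoint.of_nonneg hV).le_algebraMap_norm_self hc
      _ = algebraMap ℝ 𝒜 (c * ‖V‖) := by rw [map_mul, Algebra.smul_def]
  have hone : ((1 : ℝˣ) : ℝ) ∉ spectrum ℝ (W * R * W) := fun h =>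
    ((le_algebraMap_iff_spectrum_le (hR.conjugate_self hW)).mp hWRW 1 h).not_gt hcV
  rw [unit_mem_mul_comm, ← mul_assoc, hWW] at hone
  simpa [notMem_iff] using hone

end CStarAlgebra

theorem gap_perturbation_semidefinite_general
    {H : Type*} [NormedAddCommGroup H] [InnerProductSpace ℂ H] [CompleteSpace H]
    (A V : H →L[ℂ] H) (hA : IsSelfAdjoint A) (a b : ℝ)
    (hgap : Set.Ioo a b ∩ spectrum ℝ A = ∅)
    (hV : 0 ≤ V) :
    Set.Ioo (a + ‖V‖) b ∩ spectrum ℝ (A + V) = ∅ := by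
  refine eq_empty_of_forall_notMem fun μ ⟨⟨hVμ, hμb⟩, hμ⟩ => ?_
  have haμ : a < μ := by linarith [norm_nonneg V]
  have hμA : μ ∉ spectrum ℝ A := fun h => hgap.subset ⟨⟨haμ, hμb⟩, h⟩
  have hsmall : (μ - a)⁻¹ * ‖V‖ < 1 := by
    rw [inv_mul_lt_one₀ (sub_pos.mpr haμ)]
    linarith
  have hunit : IsUnit (1 - V * resolvent A μ) :=
    isUnit_one_sub_mul_of_le_algebraMap hV (hA.resolvent hμA)
      (resolvent_le_algebraMap_inv_sub hA hgap haμ hμb) (inv_nonneg.mpr (sub_nonneg.mpr haμ.le))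
      hsmall
  exact notMem_spectrum_add_of_isUnit_one_sub_mul_resolvent hμA hunit hμ

/-- A non-negative perturbation `V` with `‖V‖ < b - a` shrinks a spectral gap
`(a, b)` of a bounded self-adjoint operator `A` only from the left: the interval
`(a + ‖V‖, b)` is free of the real spectrum of `A + V`. -/
theorem gap_perturbation_semidefinite
    {H : Type*} [NormedAddCommGroup H] [InnerProductSpace ℂ H] [CompleteSpace H]
    (A V : H →L[ℂ] H) (hA : IsSelfAdjoint A) (a b : ℝ) (hab : a < b)
    (hgap : Set.Ioo a b ∩ spectrum ℝ A = ∅)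
    (hV : 0 ≤ V) (hVnorm : ‖V‖ < b - a) :
    Set.Ioo (a + ‖V‖) b ∩ spectrum ℝ (A + V) = ∅ :=
  gap_perturbation_semidefinite_general A V hA a b hgap hV
end

section
/- Let A be a bounded self-adjoint operator on a complex Hilbert space H whose real spectrum is a disjoint union σ ∪ Σ, and let d > 0 satisfy d ≤ |x − y| for all x ∈ σ and y ∈ Σ. Let V be a non-negative bounded operator on H with ‖V‖ < d. Define ω := {μ ∈ spectrum ℝ (A+V) | ∃ λ ∈ σ, μ − λ ∈ [0, ‖V‖]} and Ω := {μ ∈ spectrum ℝ (A+V) | ∃ λ ∈ Σ, μ − λ ∈ [0, ‖V‖]}. Then spectrum ℝ (A + V) = ω ∪ Ω, the sets ω and Ω are disjoint, and d − ‖V‖ ≤ |x − y| for all x ∈ ω and y ∈ Ω. -/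
/-!
For self-adjoint `a`, the resolvent `(μ - a)⁻¹` has norm `1 / dist(μ, σ(a))`, so by a Neumann
series the spectrum of `a + b` lies within distance `‖b‖` of the spectrum of `a`. A non-negative
perturbation `v` is a shift by `‖v‖ / 2` plus an element of norm at most `‖v‖ / 2`, since
`σ(v) ⊆ [0, ‖v‖]`; hence `σ(a + v) ⊆ σ(a) + [0, ‖v‖]`. The separation of the two parts of
`σ(A + V)` is then elementary arithmetic on the real line.
-/

open Set Pointwise Metric

theorem IsCompact.exists_gt_forall_le {β : Type*} [TopologicalSpace β] {s : Set β}
    (hs : IsCompact s) {f : β → ℝ} (hf : ContinuousOn f s) {c : ℝ} (h : ∀ x ∈ s, c < f x) :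
    ∃ δ, c < δ ∧ ∀ x ∈ s, δ ≤ f x := by
  rcases s.eq_empty_or_nonempty with rfl | hne
  · exact ⟨c + 1, by linarith, by simp⟩
  · obtain ⟨x₀, hx₀, hmin⟩ := hs.exists_isMinOn hne hf
    exact ⟨f x₀, h x₀ hx₀, hmin⟩

section

variable {A : Type*} [CStarAlgebra A]

theorem IsSelfAdjoint.spectrum_add_subset {a : A} (ha : IsSelfAdjoint a) (b : A) :
    spectrum ℝ (a + b) ⊆ spectrum ℝ a + closedBall 0 ‖b‖ := by
  intro μ hμ
  by_contra hout
  have hfar : ∀ l ∈ spectrum ℝ a, ‖b‖ < |μ - l| := fun l hl => not_le.1 fun hle =>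
    hout ⟨l, hl, μ - l, by rwa [mem_closedBall_zero_iff, Real.norm_eq_abs], by ring⟩
  obtain ⟨δ, hbδ, hδ⟩ := (spectrum.isCompact a).exists_gt_forall_le (by fun_prop) hfar
  have hδ₀ : 0 < δ := (norm_nonneg b).trans_lt hbδ
  have hne : ∀ l ∈ spectrum ℝ a, μ - l ≠ 0 := fun l hl h => by
    have := hδ l hl
    rw [h, abs_zero] at this
    linarith
  set u := cfcUnits (fun x => μ - x) a hne
  have hu : (u : A) = algebraMap ℝ A μ - a := by
    change cfc (fun x => μ - x) a = _
    rw [cfc_sub .., cfc_const .., cfc_id' ..]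
  have hinv : ‖(↑u⁻¹ : A)‖ ≤ δ⁻¹ := by
    change ‖cfc (fun x => (μ - x)⁻¹) a‖ ≤ _
    refine norm_cfc_le (by positivity) fun l hl => ?_
    rw [norm_inv, Real.norm_eq_abs]
    exact inv_anti₀ hδ₀ (hδ l hl)
  have hsmall : ‖(↑u⁻¹ : A) * b‖ < 1 := calc
    ‖(↑u⁻¹ : A) * b‖ ≤ ‖(↑u⁻¹ : A)‖ * ‖b‖ := norm_mul_le _ _
    _ ≤ δ⁻¹ * ‖b‖ := by gcongr
    _ < 1 := by rwa [inv_mul_lt_one₀ hδ₀]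
  have hfactor : algebraMap ℝ A μ - (a + b) = u * (1 - ↑u⁻¹ * b) := by
    rw [mul_sub, mul_one, ← mul_assoc, u.mul_inv, one_mul, hu]
    abel
  rw [spectrum.mem_iff, hfactor] at hμ
  exact hμ (u.isUnit.mul (isUnit_one_sub_of_norm_lt_one hsmall))

variable [PartialOrder A] [StarOrderedRing A]

theorem norm_sub_algebraMap_half_norm_le {v : A} (hv : 0 ≤ v) :
    ‖v - algebraMap ℝ A (‖v‖ / 2)‖ ≤ ‖v‖ / 2 := by
  nontriviality A
  have hcfc : v - algebraMap ℝ A (‖v‖ / 2) = cfc (fun x : ℝ => x - ‖v‖ / 2) v := by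
    rw [cfc_sub .., cfc_const .., cfc_id' ..]
  rw [hcfc]
  refine norm_cfc_le (by positivity) fun x hx => ?_
  have h₀ := spectrum_nonneg_of_nonneg hv hx
  have h₁ : x ≤ ‖v‖ := by simpa [abs_of_nonneg h₀] using spectrum.norm_le_norm_of_mem hx
  rw [Real.norm_eq_abs, abs_le]
  constructor <;> linarith

theorem IsSelfAdjoint.spectrum_add_nonneg_subset {a v : A} (ha : IsSelfAdjoint a) (hv : 0 ≤ v) :
    spectrum ℝ (a + v) ⊆ spectrum ℝ a + Icc 0 ‖v‖ := by
  set t := ‖v‖ / 2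
  have hsplit : a + v = (a + algebraMap ℝ A t) + (v - algebraMap ℝ A t) := by abel
  have hshift : IsSelfAdjoint (a + algebraMap ℝ A t) := ha.add (.algebraMap A (.all t))
  calc spectrum ℝ (a + v)
      ⊆ spectrum ℝ (a + algebraMap ℝ A t) + closedBall 0 t := by
        rw [hsplit]
        exact (hshift.spectrum_add_subset _).trans
          (add_subset_add_left (closedBall_subset_closedBall (norm_sub_algebraMap_half_norm_le hv)))
    _ = spectrum ℝ a + Icc 0 ‖v‖ := by
        rw [← spectrum.add_singleton_eq, add_assoc, singleton_add_closedBall_zero,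
          Real.closedBall_eq_Icc, sub_self, add_halves]

end

theorem le_abs_sub_of_sub_mem_Icc {x y l m r d : ℝ} (hx : x - l ∈ Icc 0 r) (hy : y - m ∈ Icc 0 r)
    (h : d ≤ |l - m|) : d - r ≤ |x - y| := by
  obtain ⟨hx₀, hxr⟩ := hx
  obtain ⟨hy₀, hyr⟩ := hy
  have hclose : |(l - m) - (x - y)| ≤ r := abs_le.2 ⟨by linarith, by linarith⟩
  linarith [abs_sub_abs_le_abs_sub (l - m) (x - y)]

theorem spectrum_separation_semidefinite_general
    {H : Type*} [NormedAddCommGroup H] [InnerProductSpace ℂ H] [CompleteSpace H]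
    (A V : H →L[ℂ] H) (hA : IsSelfAdjoint A)
    (σ τ : Set ℝ) (hspec : spectrum ℝ A = σ ∪ τ)
    (d : ℝ) (hdist : ∀ x ∈ σ, ∀ y ∈ τ, d ≤ |x - y|)
    (hV : 0 ≤ V) (hVnorm : ‖V‖ < d) :
    spectrum ℝ (A + V) =
        {μ ∈ spectrum ℝ (A + V) | ∃ l ∈ σ, μ - l ∈ Set.Icc (0 : ℝ) ‖V‖} ∪
        {μ ∈ spectrum ℝ (A + V) | ∃ l ∈ τ, μ - l ∈ Set.Icc (0 : ℝ) ‖V‖} ∧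
      Disjoint {μ ∈ spectrum ℝ (A + V) | ∃ l ∈ σ, μ - l ∈ Set.Icc (0 : ℝ) ‖V‖}
        {μ ∈ spectrum ℝ (A + V) | ∃ l ∈ τ, μ - l ∈ Set.Icc (0 : ℝ) ‖V‖} ∧
      ∀ x ∈ {μ ∈ spectrum ℝ (A + V) | ∃ l ∈ σ, μ - l ∈ Set.Icc (0 : ℝ) ‖V‖},
        ∀ y ∈ {μ ∈ spectrum ℝ (A + V) | ∃ l ∈ τ, μ - l ∈ Set.Icc (0 : ℝ) ‖V‖},
          d - ‖V‖ ≤ |x - y| := by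
  refine ⟨?_, ?_, ?_⟩
  · rw [← sep_or, eq_comm, sep_eq_self_iff_mem_true]
    intro μ hμ
    obtain ⟨l, hl, s, hs, rfl⟩ := mem_add.1 (hA.spectrum_add_nonneg_subset hV hμ)
    replace hs : l + s - l ∈ Icc 0 ‖V‖ := by rwa [add_sub_cancel_left]
    rcases hspec ▸ hl with hl | hl
    exacts [Or.inl ⟨l, hl, hs⟩, Or.inr ⟨l, hl, hs⟩]
  · rw [disjoint_left]
    rintro μ ⟨-, l, hl, hμl⟩ ⟨-, m, hm, hμm⟩
    have := le_abs_sub_of_sub_mem_Icc hμl hμm (hdist l hl m hm)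
    rw [sub_self, abs_zero] at this
    linarith
  · rintro x ⟨-, l, hl, hxl⟩ y ⟨-, m, hm, hym⟩
    exact le_abs_sub_of_sub_mem_Icc hxl hym (hdist l hl m hm)

/-- If the spectrum of the self-adjoint operator `A` is separated into two
components `σ ∪ τ` at distance at least `d`, and `V ≥ 0` with `‖V‖ < d`, then the spectrum of
`A + V` is separated into the components `ω` and `Ω` contained in the one-sided neighbourhoods
`σ + [0, ‖V‖]` and `τ + [0, ‖V‖]`, at distance at least `d - ‖V‖`. -/
theorem spectrum_separation_semidefinite
    {H : Type*} [NormedAddCommGroup H] [InnerProductSpace ℂ H] [CompleteSpace H]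
    (A V : H →L[ℂ] H) (hA : IsSelfAdjoint A)
    (σ τ : Set ℝ) (hspec : spectrum ℝ A = σ ∪ τ) (hdisj : Disjoint σ τ)
    (d : ℝ) (hd : 0 < d) (hdist : ∀ x ∈ σ, ∀ y ∈ τ, d ≤ |x - y|)
    (hV : 0 ≤ V) (hVnorm : ‖V‖ < d) :
    spectrum ℝ (A + V) =
        {μ ∈ spectrum ℝ (A + V) | ∃ l ∈ σ, μ - l ∈ Set.Icc (0 : ℝ) ‖V‖} ∪
        {μ ∈ spectrum ℝ (A + V) | ∃ l ∈ τ, μ - l ∈ Set.Icc (0 : ℝ) ‖V‖} ∧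
      Disjoint {μ ∈ spectrum ℝ (A + V) | ∃ l ∈ σ, μ - l ∈ Set.Icc (0 : ℝ) ‖V‖}
        {μ ∈ spectrum ℝ (A + V) | ∃ l ∈ τ, μ - l ∈ Set.Icc (0 : ℝ) ‖V‖} ∧
      ∀ x ∈ {μ ∈ spectrum ℝ (A + V) | ∃ l ∈ σ, μ - l ∈ Set.Icc (0 : ℝ) ‖V‖},
        ∀ y ∈ {μ ∈ spectrum ℝ (A + V) | ∃ l ∈ τ, μ - l ∈ Set.Icc (0 : ℝ) ‖V‖},
          d - ‖V‖ ≤ |x - y| :=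
  spectrum_separation_semidefinite_general A V hA σ τ hspec d hdist hV hVnorm
end

section
/- Let A be a bounded self-adjoint operator on a complex Hilbert space H whose real spectrum is a disjoint union σ ∪ Σ, and let d > 0 satisfy d ≤ |x − y| for all x ∈ σ and y ∈ Σ. Assume in addition that the convex hull of σ is disjoint from Σ, or the convex hull of Σ is disjoint from σ. Let V be a non-negative bounded operator on H, and let Q be an orthogonal projection on H (self-adjoint and idempotent) that commutes with A + V. Let D := E_A(σ) − Q. Then ‖cfc (fun x => 2·|x|·√(1 − x²)) D‖ ≤ ‖V‖/d. -/
/-!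
Put `P = E_A(σ)` and `C = PQ - QP`. For any two orthogonal projections,
`(P - Q)² + (P + Q - 1)² = 1` and `(P - Q)²(P + Q - 1)² = -C² = C C^*`, so with
`f(x) = 2|x|√(1 - x²)` (that is, `sin 2θ` at `x = sin θ`) one gets `f(P - Q)² = 4 C C^*` and,
by the C⋆-identity, `‖f(P - Q)‖ = 2‖C‖`.

To bound `‖C‖`, write `C = Z - Z^*` with `Z = PQ(1 - P)`; being off-diagonal, `‖C‖ ≤ ‖Z‖`.
Since `Q` commutes with `A + V`, `AZ - ZA = P(QV - VQ)(1 - P)`, and `‖QV - VQ‖ ≤ ‖V‖/2` because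
`V` may be replaced by `V - ‖V‖/2`, of norm `≤ ‖V‖/2` when `V ≥ 0`. The convexity hypothesis
places `σ` in some `[μ - r, μ + r]` and `τ` outside `(μ - r - d, μ + r + d)`. On the range of `P`,
`A - μ` has norm `≤ r`; on that of `1 - P` it has an inverse of norm `≤ 1/(r + d)`. Solving
`AZ - ZA = W` for `Z` through these two facts gives `d‖Z‖ ≤ ‖W‖`, hence `‖C‖ ≤ ‖V‖/(2d)`.
-/

open ContinuousLinearMap Real

/-- The spectral projection of a bounded (self-adjoint) operator `T` associated with a set
`Δ ⊆ ℝ`, defined via the real continuous functional calculus applied to the indicator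
function of `Δ`. -/
noncomputable def specProj {H : Type*} [NormedAddCommGroup H] [InnerProductSpace ℂ H]
    [CompleteSpace H] (T : H →L[ℂ] H) (Δ : Set ℝ) : H →L[ℂ] H :=
  cfc (Set.indicator Δ fun _ => (1 : ℝ)) T

theorem exists_subset_closedBall_disjoint_ball_of_disjoint_convexHull {σ τ : Set ℝ} {d : ℝ}
    (hne : σ.Nonempty) (hbdd : Bornology.IsBounded σ) (hconv : Disjoint (convexHull ℝ σ) τ)
    (hdist : ∀ x ∈ σ, ∀ y ∈ τ, d ≤ |x - y|) :
    ∃ μ r, 0 ≤ r ∧ σ ⊆ Metric.closedBall μ r ∧ Disjoint (Metric.ball μ (r + d)) τ := by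
  set a := sInf σ
  set b := sSup σ
  have hmem : ∀ x ∈ σ, a ≤ x ∧ x ≤ b := fun x hx =>
    ⟨csInf_le hbdd.bddBelow hx, le_csSup hbdd.bddAbove hx⟩
  obtain ⟨x₀, hx₀⟩ := hne
  refine ⟨(a + b) / 2, (b - a) / 2, by linarith [hmem x₀ hx₀], fun x hx => ?_, ?_⟩
  · rw [Real.closedBall_eq_Icc]
    constructor <;> linarith [hmem x hx]
  · rw [Real.ball_eq_Ioo, Set.disjoint_left]
    rintro y ⟨hy₁, hy₂⟩ hy
    by_cases hle : ∀ x ∈ σ, x ≤ y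
    · have : b ≤ y - d := csSup_le ⟨x₀, hx₀⟩ fun x hx => by
        have := hdist x hx y hy
        rw [abs_of_nonpos (by linarith [hle x hx])] at this
        linarith
      linarith
    by_cases hge : ∀ x ∈ σ, y ≤ x
    · have : y + d ≤ a := le_csInf ⟨x₀, hx₀⟩ fun x hx => by
        have := hdist x hx y hy
        rw [abs_of_nonneg (by linarith [hge x hx])] at this
        linarith
      linarith
    push Not at hle hge
    obtain ⟨x₁, hx₁, hyx₁⟩ := hle
    obtain ⟨x₂, hx₂, hx₂y⟩ := hge
    have hseg : y ∈ segment ℝ x₂ x₁ := by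
      rw [segment_eq_Icc (by linarith)]; exact ⟨hx₂y.le, hyx₁.le⟩
    exact Set.disjoint_left.mp hconv (segment_subset_convexHull hx₂ hx₁ hseg) hy

theorem le_dist_of_subset_closedBall_of_disjoint_ball {α : Type*} [PseudoMetricSpace α]
    {s t : Set α} {μ : α} {r d : ℝ} (hs : s ⊆ Metric.closedBall μ r)
    (ht : Disjoint (Metric.ball μ (r + d)) t) : ∀ x ∈ s, ∀ y ∈ t, d ≤ dist x y :=
  fun x hx y hy => by
    have hy' : r + d ≤ dist y μ := not_lt.mp fun h => Set.disjoint_left.mp ht h hy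
    linarith [dist_triangle y x μ, dist_comm x y, Metric.mem_closedBall.mp (hs hx)]

theorem ContinuousOn.indicator_union_of_le_dist {α β : Type*} [PseudoMetricSpace α]
    [TopologicalSpace β] [Zero β] {s t : Set α} {f : α → β} {d : ℝ} (hf : ContinuousOn f s)
    (hd : 0 < d) (hst : ∀ x ∈ s, ∀ y ∈ t, d ≤ dist x y) :
    ContinuousOn (s.indicator f) (s ∪ t) := by
  have hs : ∀ x ∈ s, x ∉ closure t := fun x hx hcl => by
    obtain ⟨y, hy, hxy⟩ := Metric.mem_closure_iff.mp hcl d hd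
    exact (hst x hx y hy).not_gt hxy
  have ht : ∀ y ∈ t, y ∉ closure s := fun y hy hcl => by
    obtain ⟨x, hx, hxy⟩ := Metric.mem_closure_iff.mp hcl d hd
    exact (hst x hx y hy).not_gt (dist_comm x y ▸ hxy)
  rintro x (hx | hx) <;> refine continuousWithinAt_union.mpr ⟨?_, ?_⟩
  · exact (hf x hx).congr (fun y hy => Set.indicator_of_mem hy _) (Set.indicator_of_mem hx _)
  · exact continuousWithinAt_of_notMem_closure (hs x hx)
  · exact continuousWithinAt_of_notMem_closure (ht x hx)
  · refine (continuousWithinAt_const (b := (0 : β))).congr (fun y hy => ?_) ?_ <;>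
      exact Set.indicator_of_notMem (fun h => ht _ ‹_› (subset_closure h)) _

theorem mul_norm_le_norm_of_eq_sub_mul {R : Type*} [NormedRing R] {z b s w : R} {r d : ℝ}
    (hrd : 0 < r + d) (hz : z = (b * z - w) * s) (hbz : ‖b * z‖ ≤ r * ‖z‖)
    (hs : ‖s‖ ≤ (r + d)⁻¹) : d * ‖z‖ ≤ ‖w‖ := by
  have h : ‖z‖ ≤ (r * ‖z‖ + ‖w‖) * (r + d)⁻¹ :=
    calc ‖z‖ = ‖(b * z - w) * s‖ := congrArg _ hz
      _ ≤ ‖b * z - w‖ * ‖s‖ := norm_mul_le _ _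
      _ ≤ (r * ‖z‖ + ‖w‖) * (r + d)⁻¹ :=
        mul_le_mul ((norm_sub_le _ _).trans (by linarith)) hs (norm_nonneg _)
          (by linarith [norm_nonneg (b * z), norm_nonneg w])
  rw [← div_eq_mul_inv, le_div_iff₀ hrd] at h
  linarith

section Idempotent

variable {R : Type*} [Ring R] {p q : R}

theorem IsIdempotentElem.sub_sq_add_sq (hp : IsIdempotentElem p) (hq : IsIdempotentElem q) :
    (p - q) ^ 2 + (p + q - 1) ^ 2 = 1 := by
  linear_combination (norm := noncomm_ring) 2 * hp.eq + 2 * hq.eq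

theorem IsIdempotentElem.sub_sq_mul_sq (hp : IsIdempotentElem p) (hq : IsIdempotentElem q) :
    (p - q) ^ 2 * (p + q - 1) ^ 2 = -(p * q - q * p) ^ 2 := by
  have hC : (p - q) * (p + q - 1) = p * q - q * p := by
    linear_combination (norm := noncomm_ring) hp.eq - hq.eq
  have hanti : (p + q - 1) * (p - q) = -((p - q) * (p + q - 1)) := by
    linear_combination (norm := noncomm_ring) 2 * hp.eq - 2 * hq.eq
  calc (p - q) ^ 2 * (p + q - 1) ^ 2 = -((p - q) * ((p + q - 1) * (p - q)) * (p + q - 1)) := by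
        rw [hanti]; noncomm_ring
    _ = -(p * q - q * p) ^ 2 := by rw [← hC]; noncomm_ring

end Idempotent

section CStarAlgebra

variable {𝓐 : Type*} [CStarAlgebra 𝓐]

theorem IsStarProjection.norm_mul_mul_le {p q : 𝓐} (hp : IsStarProjection p)
    (hq : IsStarProjection q) (x : 𝓐) : ‖p * x * q‖ ≤ ‖x‖ :=
  calc ‖p * x * q‖ ≤ ‖p‖ * ‖x‖ * ‖q‖ := norm_mul₃_le
    _ ≤ 1 * ‖x‖ * 1 := by gcongr <;> exact IsStarProjection.norm_le _ ‹_›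
    _ = ‖x‖ := by ring

theorem IsSelfAdjoint.norm_sq {a : 𝓐} (ha : IsSelfAdjoint a) : ‖a ^ 2‖ = ‖a‖ ^ 2 := by
  simpa using ha.norm_pow_two_pow 1

theorem cfc_sub_const {a : 𝓐} (ha : IsSelfAdjoint a) (c : ℝ) :
    cfc (fun x : ℝ => x - c) a = a - algebraMap ℝ 𝓐 c := by
  rw [cfc_sub (fun x : ℝ => x) (fun _ => c) a, cfc_id' ℝ a, cfc_const c a]

variable [PartialOrder 𝓐] [StarOrderedRing 𝓐]

theorem IsStarProjection.star_mul_self_le_of_mul_eq {e w : 𝓐} (he : IsStarProjection e)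
    (hw : w * e = w) : star w * w ≤ algebraMap ℝ 𝓐 (‖w‖ ^ 2) * e :=
  calc star w * w = e * (star w * w) * e := by
        nth_rw 1 [← hw]; nth_rw 2 [← hw]
        rw [star_mul, he.isSelfAdjoint.star_eq]; noncomm_ring
    _ ≤ e * algebraMap ℝ 𝓐 (‖w‖ ^ 2) * e :=
        he.isSelfAdjoint.conjugate_le_conjugate CStarAlgebra.star_mul_le_algebraMap_norm_sq
    _ = algebraMap ℝ 𝓐 (‖w‖ ^ 2) * e := by
        rw [← Algebra.commutes, mul_assoc, he.isIdempotentElem.eq]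

theorem IsStarProjection.norm_sub_star_le {p z : 𝓐} (hp : IsStarProjection p)
    (hz : p * z * (1 - p) = z) : ‖z - star z‖ ≤ ‖z‖ := by
  have hzq : z * (1 - p) = z := by rw [← hz, mul_assoc, hp.one_sub.isIdempotentElem.eq]
  have hpz : p * z = z := by rw [← hz, ← mul_assoc, ← mul_assoc, hp.isIdempotentElem.eq]
  have hzz : z * z = 0 := by
    rw [← hzq, ← hpz]
    simp only [mul_assoc, ← mul_assoc (1 - p) p, hp.one_sub_mul_self, zero_mul, mul_zero]
  have hzz' : star z * star z = 0 := by rw [← star_mul, hzz, star_zero]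
  have hstar' : z * star z ≤ algebraMap ℝ 𝓐 (‖z‖ ^ 2) * p := by
    simpa using hp.star_mul_self_le_of_mul_eq (w := star z)
      (by rw [← hp.isSelfAdjoint.star_eq, ← star_mul, hpz])
  have hT : star (z - star z) * (z - star z) ≤ algebraMap ℝ 𝓐 (‖z‖ ^ 2) :=
    calc star (z - star z) * (z - star z) = star z * z + z * star z := by
          rw [star_sub, star_star]
          linear_combination (norm := noncomm_ring) -hzz - hzz'
      _ ≤ algebraMap ℝ 𝓐 (‖z‖ ^ 2) * (1 - p) + algebraMap ℝ 𝓐 (‖z‖ ^ 2) * p :=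
          add_le_add (hp.one_sub.star_mul_self_le_of_mul_eq hzq) hstar'
      _ = algebraMap ℝ 𝓐 (‖z‖ ^ 2) := by noncomm_ring
  rw [← CStarAlgebra.norm_le_iff_le_algebraMap _ (by positivity) (star_mul_self_nonneg _),
    CStarRing.norm_star_mul_self, ← sq] at hT
  exact pow_le_pow_iff_left₀ (norm_nonneg _) (norm_nonneg _) two_ne_zero |>.mp hT

theorem IsStarProjection.norm_mul_sub_mul_le {p x : 𝓐} (hp : IsStarProjection p)
    (hx : IsSelfAdjoint x) : ‖p * x - x * p‖ ≤ ‖p * x * (1 - p)‖ := by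
  have h := hp.norm_sub_star_le (z := p * x * (1 - p)) (by
    rw [← mul_assoc, ← mul_assoc, hp.isIdempotentElem.eq, mul_assoc _ (1 - p),
      hp.one_sub.isIdempotentElem.eq])
  rwa [star_mul, star_mul, hp.one_sub.isSelfAdjoint.star_eq, hp.isSelfAdjoint.star_eq, hx.star_eq,
    show p * x * (1 - p) - (1 - p) * (x * p) = p * x - x * p by noncomm_ring] at h

theorem IsStarProjection.norm_mul_sub_mul_le_of_nonneg {q v : 𝓐} (hq : IsStarProjection q)
    (hv : 0 ≤ v) : ‖q * v - v * q‖ ≤ ‖v‖ / 2 := by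
  nontriviality 𝓐
  set c := ‖v‖ / 2 with hc
  have hs : ‖v - algebraMap ℝ 𝓐 c‖ ≤ c := by
    rw [← cfc_sub_const (.of_nonneg hv)]
    refine norm_cfc_le (by positivity) fun x hx => ?_
    have h0 : 0 ≤ x := spectrum_nonneg_of_nonneg hv hx
    have h1 : x ≤ ‖v‖ := (Real.le_norm_self x).trans (spectrum.norm_le_norm_of_mem hx)
    rw [Real.norm_eq_abs, abs_le]
    constructor <;> linarith [hc]
  set s := v - algebraMap ℝ 𝓐 c
  have hvs : q * v - v * q = q * s - s * q := by
    simp only [s, mul_sub, sub_mul, Algebra.commutes c q]; abel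
  calc ‖q * v - v * q‖ = ‖q * s - s * q‖ := by rw [hvs]
    _ ≤ ‖q * s * (1 - q)‖ := hq.norm_mul_sub_mul_le ((IsSelfAdjoint.of_nonneg hv).sub
        (IsSelfAdjoint.algebraMap 𝓐 (.all c)))
    _ ≤ c := (hq.norm_mul_mul_le hq.one_sub s).trans hs

theorem IsStarProjection.norm_sub_le_one {p q : 𝓐} (hp : IsStarProjection p)
    (hq : IsStarProjection q) : ‖p - q‖ ≤ 1 := by
  have hD := hp.isSelfAdjoint.sub hq.isSelfAdjoint
  have hE : IsSelfAdjoint (p + q - 1) := (hp.isSelfAdjoint.add hq.isSelfAdjoint).sub (.one 𝓐)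
  have hle : (p - q) ^ 2 ≤ 1 := by
    rw [← hp.isIdempotentElem.sub_sq_add_sq hq.isIdempotentElem]
    exact le_add_of_nonneg_right hE.sq_nonneg
  have := (CStarAlgebra.norm_le_one_iff_of_nonneg _ hD.sq_nonneg).mpr hle
  rwa [hD.norm_sq, pow_le_one_iff_of_nonneg (norm_nonneg _) two_ne_zero] at this

theorem IsStarProjection.cfc_sin_two_mul_sub_sq {p q : 𝓐} (hp : IsStarProjection p)
    (hq : IsStarProjection q) :
    cfc (fun x : ℝ => 2 * |x| * √(1 - x ^ 2)) (p - q) ^ 2 = (4 : ℝ) • -(p * q - q * p) ^ 2 := by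
  nontriviality 𝓐
  have hD := hp.isSelfAdjoint.sub hq.isSelfAdjoint
  have hspec : ∀ x ∈ spectrum ℝ (p - q), x ^ 2 ≤ 1 := fun x hx => by
    have := (spectrum.norm_le_norm_of_mem hx).trans (hp.norm_sub_le_one hq)
    rw [Real.norm_eq_abs] at this
    nlinarith [abs_nonneg x, sq_abs x]
  rw [← cfc_pow _ _ _ (by fun_prop), ← hp.isIdempotentElem.sub_sq_mul_sq hq.isIdempotentElem,
    ← sub_eq_of_eq_add' (hp.isIdempotentElem.sub_sq_add_sq hq.isIdempotentElem).symm]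
  calc cfc (fun x : ℝ => (2 * |x| * √(1 - x ^ 2)) ^ 2) (p - q)
      = cfc (fun x : ℝ => 4 * (x ^ 2 * (1 - x ^ 2))) (p - q) := cfc_congr fun x hx => by
        rw [mul_pow, mul_pow, sq_abs, Real.sq_sqrt (sub_nonneg.mpr (hspec x hx))]; ring
    _ = _ := by
        rw [cfc_const_mul (4 : ℝ) _ (p - q), cfc_mul (· ^ 2) (fun x => 1 - x ^ 2) (p - q),
          cfc_sub (fun _ => 1) (· ^ 2) (p - q), cfc_const_one ℝ (p - q), cfc_pow_id (p - q) 2]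

theorem IsStarProjection.norm_cfc_sin_two_mul_sub {p q : 𝓐} (hp : IsStarProjection p)
    (hq : IsStarProjection q) :
    ‖cfc (fun x : ℝ => 2 * |x| * √(1 - x ^ 2)) (p - q)‖ = 2 * ‖p * q - q * p‖ := by
  have hstarC : star (p * q - q * p) = -(p * q - q * p) := by
    rw [star_sub, star_mul, star_mul, hp.isSelfAdjoint.star_eq, hq.isSelfAdjoint.star_eq, neg_sub]
  refine (sq_eq_sq₀ (norm_nonneg _) (by positivity)).mp ?_
  calc ‖cfc (fun x : ℝ => 2 * |x| * √(1 - x ^ 2)) (p - q)‖ ^ 2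
      = ‖(4 : ℝ) • ((p * q - q * p) * star (p * q - q * p))‖ := by
        rw [← (cfc_predicate _ _ : IsSelfAdjoint _).norm_sq, hp.cfc_sin_two_mul_sub_sq hq, hstarC, mul_neg, sq]
    _ = (2 * ‖p * q - q * p‖) ^ 2 := by
        rw [norm_smul, CStarRing.norm_self_mul_star]; norm_num; ring

end CStarAlgebra

section SpectralProjection

variable {H : Type*} [NormedAddCommGroup H] [InnerProductSpace ℂ H] [CompleteSpace H]

theorem isStarProjection_specProj (T : H →L[ℂ] H) (Δ : Set ℝ) :
    IsStarProjection (specProj T Δ) := by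
  refine ⟨?_, cfc_predicate _ _⟩
  by_cases h : ContinuousOn (Δ.indicator fun _ => (1 : ℝ)) (spectrum ℝ T)
  · rw [IsIdempotentElem, specProj, ← cfc_mul _ _ T h h]
    exact cfc_congr fun x _ => by by_cases hx : x ∈ Δ <;> simp [hx]
  · rw [specProj, cfc_apply_of_not_continuousOn T h]
    exact IsIdempotentElem.zero

theorem commute_specProj (T : H →L[ℂ] H) (Δ : Set ℝ) : Commute T (specProj T Δ) :=
  ((Commute.refl T).cfc_real _).symm

theorem specProj_eq_one_sub {T : H →L[ℂ] H} (hT : IsSelfAdjoint T) {σ τ : Set ℝ} {d : ℝ}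
    (hspec : spectrum ℝ T = σ ∪ τ) (hd : 0 < d) (hdist : ∀ x ∈ σ, ∀ y ∈ τ, d ≤ dist x y) :
    specProj T τ = 1 - specProj T σ := by
  have hσ : ContinuousOn (σ.indicator fun _ => (1 : ℝ)) (spectrum ℝ T) :=
    hspec ▸ continuousOn_const.indicator_union_of_le_dist hd hdist
  rw [specProj, specProj, ← cfc_const_one ℝ T, ← cfc_sub _ _ T]
  refine cfc_congr fun x hx => ?_
  rw [hspec] at hx
  rcases hx with hx | hx
  · have : x ∉ τ := fun hxτ => (hdist x hx x hxτ).not_gt (by simpa using hd)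
    simp [hx, this]
  · have : x ∉ σ := fun hxσ => (hdist x hxσ x hx).not_gt (by simpa using hd)
    simp [hx, this]

theorem norm_sub_algebraMap_mul_specProj_le {T : H →L[ℂ] H} (hT : IsSelfAdjoint T) {σ : Set ℝ}
    (hσc : ContinuousOn (σ.indicator fun _ => (1 : ℝ)) (spectrum ℝ T)) {μ r : ℝ} (hr : 0 ≤ r)
    (hσ : σ ⊆ Metric.closedBall μ r) :
    ‖(T - algebraMap ℝ (H →L[ℂ] H) μ) * specProj T σ‖ ≤ r := by
  rw [← cfc_sub_const hT μ, specProj, ← cfc_mul _ _ T (by fun_prop) hσc]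
  refine norm_cfc_le hr fun x _ => ?_
  by_cases hx : x ∈ σ
  · simpa [hx, Real.dist_eq] using hσ hx
  · simpa [hx] using hr

theorem specProj_eq_sub_algebraMap_mul_cfc {T : H →L[ℂ] H} (hT : IsSelfAdjoint T)
    {σ τ : Set ℝ} {d μ : ℝ} (hspec : spectrum ℝ T = σ ∪ τ) (hd : 0 < d)
    (hdist : ∀ x ∈ σ, ∀ y ∈ τ, d ≤ dist x y) (hμ : μ ∉ τ) :
    specProj T τ
      = (T - algebraMap ℝ (H →L[ℂ] H) μ) * cfc (τ.indicator fun x => (x - μ)⁻¹) T := by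
  have hne : ∀ y ∈ τ, y - μ ≠ 0 := fun y hy h => hμ (sub_eq_zero.mp h ▸ hy)
  have hcont : ContinuousOn (τ.indicator fun x => (x - μ)⁻¹) (spectrum ℝ T) := by
    rw [hspec, Set.union_comm]
    exact ((continuousOn_id.sub continuousOn_const).inv₀ hne).indicator_union_of_le_dist hd
      fun y hy x hx => dist_comm x y ▸ hdist x hx y hy
  rw [← cfc_sub_const hT μ, specProj, ← cfc_mul _ _ T (by fun_prop) hcont]
  refine cfc_congr fun x _ => ?_
  by_cases hx : x ∈ τ
  · simp [hx, hne x hx]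
  · simp [hx]

theorem mul_norm_specProj_mul_specProj_le {T : H →L[ℂ] H} (hT : IsSelfAdjoint T)
    {σ τ : Set ℝ} {μ r d : ℝ} (hspec : spectrum ℝ T = σ ∪ τ) (hr : 0 ≤ r) (hd : 0 < d)
    (hσ : σ ⊆ Metric.closedBall μ r) (hτ : Disjoint (Metric.ball μ (r + d)) τ) (X : H →L[ℂ] H) :
    d * ‖specProj T σ * X * specProj T τ‖
      ≤ ‖specProj T σ * (T * X - X * T) * specProj T τ‖ := by
  have hdist := le_dist_of_subset_closedBall_of_disjoint_ball hσ hτ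
  set B := T - algebraMap ℝ (H →L[ℂ] H) μ
  set R := cfc (τ.indicator fun x => (x - μ)⁻¹) T
  have hR : ‖R‖ ≤ (r + d)⁻¹ := norm_cfc_le (by positivity) fun x _ => by
    by_cases hx : x ∈ τ
    · have : r + d ≤ |x - μ| := not_lt.mp fun h => Set.disjoint_left.mp hτ h hx
      simpa [hx] using inv_anti₀ (by positivity) this
    · simp [hx]; positivity
  have hP' : specProj T τ = B * R := specProj_eq_sub_algebraMap_mul_cfc hT hspec hd hdist
    fun h => Set.disjoint_left.mp hτ (Metric.mem_ball_self (by positivity)) h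
  have hBP : ‖B * specProj T σ‖ ≤ r := norm_sub_algebraMap_mul_specProj_le hT
    (hspec ▸ continuousOn_const.indicator_union_of_le_dist hd hdist) hr hσ
  set P := specProj T σ
  set P' := specProj T τ
  have hPP : P * P = P := (isStarProjection_specProj T σ).isIdempotentElem.eq
  have hP'P' : P' * P' = P' := (isStarProjection_specProj T τ).isIdempotentElem.eq
  have hcomm : B * (P * X * P') - P * X * P' * B = P * (T * X - X * T) * P' := by
    have hTP : T * P = P * T := (commute_specProj T σ).eq
    have hTP' : T * P' = P' * T := (commute_specProj T τ).eq
    have hμZ := Algebra.commutes μ (P * X * P')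
    calc B * (P * X * P') - P * X * P' * B
        = (T * P) * X * P' - P * X * (P' * T)
          - (algebraMap ℝ _ μ * (P * X * P') - P * X * P' * algebraMap ℝ _ μ) := by
          simp only [B]; noncomm_ring
      _ = P * (T * X - X * T) * P' := by rw [hTP, ← hTP', hμZ]; noncomm_ring
  rw [← hcomm]
  refine mul_norm_le_norm_of_eq_sub_mul (b := B) (by linarith) ?_ ?_ hR
  · rw [sub_sub_cancel, mul_assoc _ B R, ← hP', mul_assoc (P * X), hP'P']
  · calc ‖B * (P * X * P')‖ = ‖(B * P) * (P * X * P')‖ := by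
          rw [show (B * P) * (P * X * P') = B * ((P * P) * X * P') by noncomm_ring, hPP]
      _ ≤ ‖B * P‖ * ‖P * X * P'‖ := norm_mul_le _ _
      _ ≤ r * ‖P * X * P'‖ := by gcongr

theorem norm_specProj_mul_sub_mul_specProj_le {A V Q : H →L[ℂ] H} (hA : IsSelfAdjoint A)
    {σ τ : Set ℝ} {d : ℝ} (hspec : spectrum ℝ A = σ ∪ τ) (hd : 0 < d)
    (hdist : ∀ x ∈ σ, ∀ y ∈ τ, d ≤ dist x y) (hconv : Disjoint (convexHull ℝ σ) τ)
    (hV : 0 ≤ V) (hQ : IsStarProjection Q) (hcomm : Commute Q (A + V)) :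
    ‖specProj A σ * Q - Q * specProj A σ‖ ≤ ‖V‖ / (2 * d) := by
  rcases σ.eq_empty_or_nonempty with rfl | hne
  · simp only [specProj, Set.indicator_empty, cfc_const_zero, zero_mul, mul_zero, sub_self,
      norm_zero]
    positivity
  obtain ⟨μ, r, hr, hσ, hτ⟩ := exists_subset_closedBall_disjoint_ball_of_disjoint_convexHull hne
    ((spectrum.isCompact A).isBounded.subset (hspec ▸ Set.subset_union_left)) hconv hdist
  have hP := isStarProjection_specProj A σ
  have hAQ : A * Q - Q * A = Q * V - V * Q := by
    linear_combination (norm := noncomm_ring) -hcomm.eq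
  calc ‖specProj A σ * Q - Q * specProj A σ‖ ≤ ‖specProj A σ * Q * (1 - specProj A σ)‖ :=
        hP.norm_mul_sub_mul_le hQ.isSelfAdjoint
    _ ≤ ‖specProj A σ * (A * Q - Q * A) * specProj A τ‖ / d := by
        rw [le_div_iff₀ hd, mul_comm, ← specProj_eq_one_sub hA hspec hd hdist]
        exact mul_norm_specProj_mul_specProj_le hA hspec hr hd hσ hτ Q
    _ ≤ ‖V‖ / 2 / d := by
        rw [hAQ]
        gcongr
        exact (hP.norm_mul_mul_le (isStarProjection_specProj A τ) _).trans
          (hQ.norm_mul_sub_mul_le_of_nonneg hV)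
    _ = ‖V‖ / (2 * d) := div_div _ _ _

end SpectralProjection

theorem sin_two_Theta_semidefinite_convex_general
    {H : Type*} [NormedAddCommGroup H] [InnerProductSpace ℂ H] [CompleteSpace H]
    (A V Q : H →L[ℂ] H) (hA : IsSelfAdjoint A)
    (σ τ : Set ℝ) (hspec : spectrum ℝ A = σ ∪ τ)
    (d : ℝ) (hd : 0 < d) (hdist : ∀ x ∈ σ, ∀ y ∈ τ, d ≤ |x - y|)
    (hconv : Disjoint (convexHull ℝ σ) τ ∨ Disjoint (convexHull ℝ τ) σ)
    (hV : 0 ≤ V) (hQ : IsSelfAdjoint Q) (hQ2 : Q ∘L Q = Q)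
    (hcomm : Q ∘L (A + V) = (A + V) ∘L Q) :
    ‖cfc (fun x : ℝ => 2 * |x| * Real.sqrt (1 - x ^ 2)) (specProj A σ - Q)‖ ≤ ‖V‖ / d := by
  have hQ' : IsStarProjection Q := ⟨hQ2, hQ⟩
  have hcommute : Commute Q (A + V) := hcomm
  rw [(isStarProjection_specProj A σ).norm_cfc_sin_two_mul_sub hQ']
  have hcomm_le : ‖specProj A σ * Q - Q * specProj A σ‖ ≤ ‖V‖ / (2 * d) := by
    rcases hconv with hconv | hconv
    · exact norm_specProj_mul_sub_mul_specProj_le hA hspec hd hdist hconv hV hQ' hcommute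
    · have h := norm_specProj_mul_sub_mul_specProj_le hA (hspec.trans (Set.union_comm σ τ)) hd
        (fun y hy x hx => dist_comm x y ▸ hdist x hx y hy) hconv hV hQ' hcommute
      rwa [specProj_eq_one_sub hA hspec hd hdist, ← norm_neg,
        show -((1 - specProj A σ) * Q - Q * (1 - specProj A σ))
          = specProj A σ * Q - Q * specProj A σ by noncomm_ring] at h
  calc 2 * ‖specProj A σ * Q - Q * specProj A σ‖ ≤ 2 * (‖V‖ / (2 * d)) := by gcongr
    _ = ‖V‖ / d := by field_simp

/-- the `sin 2Θ` theorem for semidefinite perturbations, operator version,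
under the additional geometric assumption that the convex hull of one spectral component is
disjoint from the other: the constant `π/2` can be replaced by `1`. -/
theorem sin_two_Theta_semidefinite_convex
    {H : Type*} [NormedAddCommGroup H] [InnerProductSpace ℂ H] [CompleteSpace H]
    (A V Q : H →L[ℂ] H) (hA : IsSelfAdjoint A)
    (σ τ : Set ℝ) (hspec : spectrum ℝ A = σ ∪ τ) (hdisj : Disjoint σ τ)
    (d : ℝ) (hd : 0 < d) (hdist : ∀ x ∈ σ, ∀ y ∈ τ, d ≤ |x - y|)
    (hconv : Disjoint (convexHull ℝ σ) τ ∨ Disjoint (convexHull ℝ τ) σ)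
    (hV : 0 ≤ V) (hQ : IsSelfAdjoint Q) (hQ2 : Q ∘L Q = Q)
    (hcomm : Q ∘L (A + V) = (A + V) ∘L Q) :
    ‖cfc (fun x : ℝ => 2 * |x| * Real.sqrt (1 - x ^ 2)) (specProj A σ - Q)‖ ≤ ‖V‖ / d :=
  sin_two_Theta_semidefinite_convex_general A V Q hA σ τ hspec d hd hdist hconv hV hQ hQ2 hcomm
end

section
/- For every real number v with 0 ≤ v < 1, consider the real 2×2 matrices A := !![−1/2, 0; 0, 1/2] and V := !![v(v+1)/2, v·√(1−v²)/2; v·√(1−v²)/2, v(1−v)/2]. Then V is positive semidefinite, the set of eigenvalues of V is {0, v} (for v > 0; for v = 0 it is {0}), and, setting θ := arcsin(v)/2, the vector (cos θ, −sin θ) satisfies (A + V) *ᵥ (cos θ, −sin θ) = ((v − √(1−v²))/2) • (cos θ, −sin θ); that is, (cos θ, −sin θ) is an eigenvector of A + V with eigenvalue (v − √(1−v²))/2. -/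
open Matrix Real

/-! The perturbation is `V = (v/2) • !![1 + v, √(1-v²); √(1-v²), 1 - v]` with trace `v` and
determinant `0`, so its eigenvalues are `0` and `v`, and a real symmetric matrix with nonnegative
spectrum is positive semidefinite. Writing `v = sin 2θ` and `√(1-v²) = cos 2θ`, both components of
`(A + V) (cos θ, -sin θ) - ((v - √(1-v²))/2) (cos θ, -sin θ)` vanish by the double angle formulas
and `cos² θ + sin² θ = 1`. -/

namespace Matrix

theorem spectrum_fin_two_eq_pair {K : Type*} [Field K] {M : Matrix (Fin 2) (Fin 2) K} {a b : K}
    (htrace : M.trace = a + b) (hdet : M.det = a * b) : spectrum K M = {a, b} := by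
  ext μ
  have hfactor : M.charpoly.eval μ = (μ - a) * (μ - b) := by
    rw [charpoly_fin_two, htrace, hdet]
    simp only [Polynomial.eval_add, Polynomial.eval_sub, Polynomial.eval_mul, Polynomial.eval_pow,
      Polynomial.eval_C, Polynomial.eval_X]
    ring
  rw [mem_spectrum_iff_isRoot_charpoly, Polynomial.IsRoot.def, hfactor, mul_eq_zero, sub_eq_zero,
    sub_eq_zero, Set.mem_insert_iff, Set.mem_singleton_iff]

end Matrix

/-- The perturbation `V` of the sharpness example, with `w` standing for `√(1 - v²)`. -/
noncomputable def sharpPerturbation (v w : ℝ) : Matrix (Fin 2) (Fin 2) ℝ :=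
  !![v * (v + 1) / 2, v * w / 2; v * w / 2, v * (1 - v) / 2]

theorem sharpPerturbation_isHermitian (v w : ℝ) : (sharpPerturbation v w).IsHermitian := by
  ext i j
  fin_cases i <;> fin_cases j <;> simp [sharpPerturbation]

theorem trace_sharpPerturbation (v w : ℝ) : (sharpPerturbation v w).trace = v := by
  rw [sharpPerturbation, trace_fin_two_of]
  ring

theorem det_sharpPerturbation {v w : ℝ} (hw : w ^ 2 = 1 - v ^ 2) :
    (sharpPerturbation v w).det = 0 := by
  rw [sharpPerturbation, det_fin_two_of]
  linear_combination (-v ^ 2 / 4) * hw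

theorem spectrum_sharpPerturbation {v w : ℝ} (hw : w ^ 2 = 1 - v ^ 2) :
    spectrum ℝ (sharpPerturbation v w) = {0, v} :=
  spectrum_fin_two_eq_pair (by rw [trace_sharpPerturbation, zero_add])
    (by rw [det_sharpPerturbation hw, zero_mul])

theorem sharpPerturbation_posSemidef {v w : ℝ} (hv : 0 ≤ v) (hw : w ^ 2 = 1 - v ^ 2) :
    (sharpPerturbation v w).PosSemidef := by
  refine posSemidef_iff_isHermitian_and_spectrum_nonneg.mpr
    ⟨sharpPerturbation_isHermitian v w, ?_⟩
  rw [spectrum_sharpPerturbation hw]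
  exact Set.insert_subset_iff.mpr ⟨le_refl (0 : ℝ), Set.singleton_subset_iff.mpr hv⟩

theorem mulVec_cos_neg_sin_of_double_angle {θ v w : ℝ} (hv : sin (2 * θ) = v)
    (hw : cos (2 * θ) = w) :
    (!![-(1 / 2), 0; 0, 1 / 2] + sharpPerturbation v w) *ᵥ ![cos θ, -sin θ] =
      ((v - w) / 2) • ![cos θ, -sin θ] := by
  rw [sin_two_mul] at hv
  rw [cos_two_mul] at hw
  subst hv hw
  have hpyth := sin_sq_add_cos_sq θ
  ext i
  fin_cases i <;> simp [sharpPerturbation, mulVec, dotProduct, Fin.sum_univ_two]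
  · linear_combination (cos θ) * hpyth
  · linear_combination (2 * sin θ * cos θ ^ 2) * hpyth

/-- sharpness example for the semidefinite `sin 2Θ` theorem. For `0 ≤ v < 1`
and the `2 × 2` matrices `A = diag(-1/2, 1/2)` and
`V = !![v(v+1)/2, v√(1-v²)/2; v√(1-v²)/2, v(1-v)/2]`, the matrix `V` is positive semidefinite
with eigenvalue set `{0, v}`, and `(cos θ, -sin θ)` with `θ = arcsin(v)/2` is an eigenvector of
`A + V` for the eigenvalue `(v - √(1-v²))/2`. -/
theorem sharpness_example
    (v : ℝ) (hv0 : 0 ≤ v) (hv1 : v < 1) :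
    (!![v * (v + 1) / 2, v * Real.sqrt (1 - v ^ 2) / 2;
        v * Real.sqrt (1 - v ^ 2) / 2, v * (1 - v) / 2] : Matrix (Fin 2) (Fin 2) ℝ).PosSemidef ∧
    spectrum ℝ (!![v * (v + 1) / 2, v * Real.sqrt (1 - v ^ 2) / 2;
        v * Real.sqrt (1 - v ^ 2) / 2, v * (1 - v) / 2] : Matrix (Fin 2) (Fin 2) ℝ) = {0, v} ∧
    ((!![-(1 / 2), 0; 0, 1 / 2] : Matrix (Fin 2) (Fin 2) ℝ) +
        !![v * (v + 1) / 2, v * Real.sqrt (1 - v ^ 2) / 2;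
           v * Real.sqrt (1 - v ^ 2) / 2, v * (1 - v) / 2]) *ᵥ
        ![Real.cos (Real.arcsin v / 2), -Real.sin (Real.arcsin v / 2)] =
      ((v - Real.sqrt (1 - v ^ 2)) / 2) •
        ![Real.cos (Real.arcsin v / 2), -Real.sin (Real.arcsin v / 2)] := by
  have hw : √(1 - v ^ 2) ^ 2 = 1 - v ^ 2 := sq_sqrt (by nlinarith)
  have hdouble : 2 * (arcsin v / 2) = arcsin v := mul_div_cancel₀ _ two_ne_zero
  refine ⟨sharpPerturbation_posSemidef hv0 hw, spectrum_sharpPerturbation hw,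
    mulVec_cos_neg_sin_of_double_angle ?_ ?_⟩
  · rw [hdouble, sin_arcsin (by linarith) hv1.le]
  · rw [hdouble, cos_arcsin]
end

section
/- Let V be a non-negative bounded operator on a complex Hilbert space H and let P be an orthogonal projection on H (self-adjoint and idempotent), with complementary projection P⊥ := 1 − P. Then 2·‖P⊥ ∘ V ∘ P‖ ≤ ‖V‖ and ‖V‖ ≤ 2·max(‖P ∘ V ∘ P‖, ‖P⊥ ∘ V ∘ P⊥‖). (These are the block-components of V with respect to the orthogonal decomposition H = ran P ⊕ ran P⊥.) -/
/-!
Write `q = 1 - p` and `u = 2p - 1 = p - q`, a self-adjoint unitary. Expanding `a = (p + q) a (p + q)`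
gives `a - u a u = 2 (p a q + q a p)` and `2 (p a p + q a q) - a = u a u`. The first identity
exhibits `2 (p a q + q a p)` as a difference of two positive elements of norm at most `‖a‖`, and
`q a p` is a corner of it. The second gives `a ≤ 2 (p a p + q a q) ≤ 2 max(‖p a p‖, ‖q a q‖) • 1`.
-/

namespace CStarAlgebra

variable {A : Type*} [CStarAlgebra A] [PartialOrder A] [StarOrderedRing A]

lemma norm_le_of_neg_algebraMap_le_of_le_algebraMap {x : A} {r : ℝ} (hr : 0 ≤ r)
    (hx : IsSelfAdjoint x) (hle : x ≤ algebraMap ℝ A r) (hge : -algebraMap ℝ A r ≤ x) :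
    ‖x‖ ≤ r := by
  obtain _ | _ := subsingleton_or_nontrivial A
  · simp [Subsingleton.elim x 0, hr]
  rw [le_algebraMap_iff_spectrum_le hx] at hle
  rw [← map_neg, algebraMap_le_iff_le_spectrum hx] at hge
  obtain h | h := norm_or_neg_norm_mem_spectrum hx
  · exact hle _ h
  · linarith [hge _ h]

lemma norm_sub_le_max_of_nonneg {a b : A} (ha : 0 ≤ a) (hb : 0 ≤ b) :
    ‖a - b‖ ≤ max ‖a‖ ‖b‖ := by
  refine norm_le_of_neg_algebraMap_le_of_le_algebraMap (le_max_of_le_left (norm_nonneg a))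
    ((IsSelfAdjoint.of_nonneg ha).sub (.of_nonneg hb)) ?_ ?_
  · calc a - b ≤ a := sub_le_self a hb
      _ ≤ algebraMap ℝ A ‖a‖ := IsSelfAdjoint.le_algebraMap_norm_self
      _ ≤ algebraMap ℝ A (max ‖a‖ ‖b‖) := algebraMap_mono A (le_max_left _ _)
  · rw [neg_le, neg_sub]
    calc b - a ≤ b := sub_le_self b ha
      _ ≤ algebraMap ℝ A ‖b‖ := IsSelfAdjoint.le_algebraMap_norm_self
      _ ≤ algebraMap ℝ A (max ‖a‖ ‖b‖) := algebraMap_mono A (le_max_right _ _)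

end CStarAlgebra

lemma IsIdempotentElem.one_sub_mul_off_diagonal_mul {R : Type*} [Ring R] {p : R}
    (hp : IsIdempotentElem p) (a : R) :
    (1 - p) * (p * a * (1 - p) + (1 - p) * a * p) * p = (1 - p) * a * p := by
  simp only [mul_add, ← mul_assoc, hp.one_sub_mul_self, hp.one_sub.eq, zero_mul, zero_add]
  exact hp.mul_mul_self _

namespace IsStarProjection

variable {A : Type*} [CStarAlgebra A] [PartialOrder A] [StarOrderedRing A] {p : A}

lemma conjugate_two_mul_sub_one_nonneg (hp : IsStarProjection p) {a : A} (ha : 0 ≤ a) :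
    0 ≤ (2 * p - 1) * a * (2 * p - 1) := by
  have hu : star (2 * p - 1) = 2 * p - 1 := by
    simp [hp.isSelfAdjoint.star_eq, (Commute.ofNat_left 2 p).eq]
  simpa [hu] using star_left_conjugate_nonneg ha (2 * p - 1)

lemma two_mul_norm_one_sub_mul_mul_le (hp : IsStarProjection p) {a : A} (ha : 0 ≤ a) :
    2 * ‖(1 - p) * a * p‖ ≤ ‖a‖ := by
  set u := 2 * p - 1
  have hu : u ∈ unitary A := hp.two_mul_sub_one_mem_unitary
  set b := p * a * (1 - p) + (1 - p) * a * p
  have hsplit : a - u * a * u = (2 : ℝ) • b := by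
    simp only [u, b, two_smul]
    noncomm_ring
  calc 2 * ‖(1 - p) * a * p‖ = 2 * ‖(1 - p) * b * p‖ := by
        rw [hp.isIdempotentElem.one_sub_mul_off_diagonal_mul]
    _ ≤ 2 * ‖b‖ := by
        gcongr
        calc _ ≤ ‖1 - p‖ * ‖b‖ * ‖p‖ := norm_mul₃_le
          _ ≤ 1 * ‖b‖ * 1 := by gcongr; exacts [hp.one_sub.norm_le, hp.norm_le]
          _ = ‖b‖ := by ring
    _ = ‖a - u * a * u‖ := by rw [hsplit, norm_smul, Real.norm_two]
    _ ≤ max ‖a‖ ‖u * a * u‖ :=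
        CStarAlgebra.norm_sub_le_max_of_nonneg ha (hp.conjugate_two_mul_sub_one_nonneg ha)
    _ = ‖a‖ := by
        rw [CStarRing.norm_mul_mem_unitary _ hu, CStarRing.norm_mem_unitary_mul _ hu, max_self]

lemma conjugate_le_norm_smul (hp : IsStarProjection p) {a : A} (ha : IsSelfAdjoint a) :
    p * a * p ≤ ‖p * a * p‖ • p := by
  have h := CStarAlgebra.star_left_conjugate_le_norm_smul (a := p) (b := p * a * p)
    (ha.conjugate_self hp.isSelfAdjoint)
  rwa [hp.isSelfAdjoint.star_eq, hp.isIdempotentElem.eq, ← mul_assoc,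
    hp.isIdempotentElem.mul_self_mul, hp.isIdempotentElem.mul_mul_self] at h

lemma norm_le_two_mul_max (hp : IsStarProjection p) {a : A} (ha : 0 ≤ a) :
    ‖a‖ ≤ 2 * max ‖p * a * p‖ ‖(1 - p) * a * (1 - p)‖ := by
  set M := max ‖p * a * p‖ ‖(1 - p) * a * (1 - p)‖
  have hM : 0 ≤ M := le_max_of_le_left (norm_nonneg _)
  have hsa := IsSelfAdjoint.of_nonneg ha
  have hdiag : p * a * p + (1 - p) * a * (1 - p) ≤ algebraMap ℝ A M :=
    calc p * a * p + (1 - p) * a * (1 - p)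
        ≤ ‖p * a * p‖ • p + ‖(1 - p) * a * (1 - p)‖ • (1 - p) :=
          add_le_add (hp.conjugate_le_norm_smul hsa) (hp.one_sub.conjugate_le_norm_smul hsa)
      _ ≤ M • p + M • (1 - p) :=
          add_le_add (smul_le_smul_of_nonneg_right (le_max_left _ _) hp.nonneg)
            (smul_le_smul_of_nonneg_right (le_max_right _ _) hp.one_sub.nonneg)
      _ = algebraMap ℝ A M := by
          rw [← smul_add, add_sub_cancel, Algebra.algebraMap_eq_smul_one]
  rw [CStarAlgebra.norm_le_iff_le_algebraMap a (by positivity) ha]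
  calc a ≤ (2 : ℝ) • (p * a * p + (1 - p) * a * (1 - p)) := by
        rw [← sub_nonneg]
        convert hp.conjugate_two_mul_sub_one_nonneg ha using 1
        rw [two_smul]
        noncomm_ring
    _ ≤ (2 : ℝ) • algebraMap ℝ A M := smul_le_smul_of_nonneg_left hdiag zero_le_two
    _ = algebraMap ℝ A (2 * M) := by rw [Algebra.smul_def, map_mul]

end IsStarProjection

/-- Lemma A.2 for operators: for a non-negative bounded operator `V` and an
orthogonal projection `P` with complement `P⊥ = 1 - P`, the block components of `V` with respect
to `H = ran P ⊕ ran P⊥` satisfy `2‖P⊥ V P‖ ≤ ‖V‖` and `‖V‖ ≤ 2 max(‖P V P‖, ‖P⊥ V P⊥‖)`. -/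
theorem block_norm_bounds_of_nonneg
    {H : Type*} [NormedAddCommGroup H] [InnerProductSpace ℂ H] [CompleteSpace H]
    (V P : H →L[ℂ] H) (hV : 0 ≤ V) (hP : IsSelfAdjoint P) (hP2 : P ∘L P = P) :
    2 * ‖(1 - P) ∘L V ∘L P‖ ≤ ‖V‖ ∧
      ‖V‖ ≤ 2 * max ‖P ∘L V ∘L P‖ ‖(1 - P) ∘L V ∘L (1 - P)‖ := by
  have hPproj : IsStarProjection P := ⟨hP2, hP⟩
  exact ⟨hPproj.two_mul_norm_one_sub_mul_mul_le hV, hPproj.norm_le_two_mul_max hV⟩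
end
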